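/- For all λ, μ ≥ 0, the total variation distance between the Poisson distribution with mean λ and the Poisson distribution with mean μ is at most |λ − μ|. -/

import Mathlib

open Real

/-- Poisson pmf with mean `l` at `k`. -/
noncomputable def poissonPmf (l : ℝ) (k : ℕ) : ℝ :=
  Real.exp (-l) * l ^ k / (Nat.factorial k)

/-- Total variation distance between two distributions on ℕ given by pmfs. -/
noncomputable def tvDist (p q : ℕ → ℝ) : ℝ :=
  (1 / 2) * ∑' k : ℕ, |p k - q k|

/-!
If `0 ≤ l ≤ m`, then `poissonPmf m ≥ e^{l - m} • poissonPmf l` pointwise, i.e. the two laws share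
a common part of mass `e^{l - m}`. Two probability vectors with a common part of mass `c` are at
total variation distance at most `1 - c`, and `1 - e^{l - m} ≤ m - l`.
-/

theorem tvDist_comm (p q : ℕ → ℝ) : tvDist p q = tvDist q p := by
  simp only [tvDist, abs_sub_comm (p _)]

theorem tvDist_le_one_sub_of_mul_le {p q : ℕ → ℝ} {c : ℝ} (hp : HasSum p 1) (hq : HasSum q 1)
    (hp0 : ∀ k, 0 ≤ p k) (hc : c ≤ 1) (hcpq : ∀ k, c * p k ≤ q k) :
    tvDist p q ≤ 1 - c := by
  have hcommon : HasSum (fun k ↦ q k - c * p k) (1 - c * 1) := hq.sub (hp.mul_left c)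
  have hrest : HasSum (fun k ↦ (1 - c) * p k) ((1 - c) * 1) := hp.mul_left (1 - c)
  have hpoint : ∀ k, |p k - q k| ≤ (q k - c * p k) + (1 - c) * p k := fun k ↦ by
    rw [abs_sub_comm, show q k - p k = (q k - c * p k) - (1 - c) * p k by ring]
    refine (abs_sub _ _).trans_eq ?_
    rw [abs_of_nonneg (sub_nonneg.2 (hcpq k)),
      abs_of_nonneg (mul_nonneg (sub_nonneg.2 hc) (hp0 k))]
  have hle := (hp.summable.sub hq.summable).abs.tsum_le_tsum hpoint
    (hcommon.add hrest).summable
  rw [(hcommon.add hrest).tsum_eq] at hle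
  rw [tvDist]
  linarith

theorem poissonPmf_nonneg {l : ℝ} (hl : 0 ≤ l) (k : ℕ) : 0 ≤ poissonPmf l k := by
  unfold poissonPmf
  positivity

theorem hasSum_poissonPmf (l : ℝ) : HasSum (poissonPmf l) 1 := by
  have h := (NormedSpace.expSeries_div_hasSum_exp l).mul_left (Real.exp (-l))
  rw [← Real.exp_eq_exp_ℝ, ← Real.exp_add, neg_add_cancel, Real.exp_zero] at h
  simp only [← mul_div_assoc] at h
  exact h

theorem exp_sub_mul_poissonPmf_le {l m : ℝ} (hl : 0 ≤ l) (hlm : l ≤ m) (k : ℕ) :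
    Real.exp (l - m) * poissonPmf l k ≤ poissonPmf m k := by
  have hmerge : Real.exp (l - m) * poissonPmf l k = Real.exp (-m) * l ^ k / k.factorial := by
    rw [poissonPmf, ← mul_div_assoc, ← mul_assoc, ← Real.exp_add]
    ring_nf
  rw [hmerge, poissonPmf]
  gcongr

theorem tvDist_poissonPmf_le_of_le {l m : ℝ} (hl : 0 ≤ l) (hlm : l ≤ m) :
    tvDist (poissonPmf l) (poissonPmf m) ≤ m - l := by
  refine (tvDist_le_one_sub_of_mul_le (hasSum_poissonPmf l) (hasSum_poissonPmf m)
    (poissonPmf_nonneg hl)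
    (Real.exp_le_one_iff.2 (by linarith)) (exp_sub_mul_poissonPmf_le hl hlm)).trans ?_
  linarith [Real.add_one_le_exp (l - m)]

theorem stmt0 (l m : ℝ) (hl : 0 ≤ l) (hm : 0 ≤ m) :
    tvDist (poissonPmf l) (poissonPmf m) ≤ |l - m| := by
  rcases le_total l m with hlm | hml
  · rw [abs_of_nonpos (sub_nonpos.2 hlm), neg_sub]
    exact tvDist_poissonPmf_le_of_le hl hlm
  · rw [abs_of_nonneg (sub_nonneg.2 hml), tvDist_comm]
    exact tvDist_poissonPmf_le_of_le hm hml
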